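/- Let 1 < α < 2, let β satisfy α-1 ≤ β ≤ 1, and set λ_i := [sin(πα)/(sin(π(α-β)) + sin(πβ))]·Γ(i+α)/i!. Then for every integer j ≥ 0 there exists a constant C > 0 such that for all integers i ≥ max(j,1), (1/λ_i²) · ((i+j+α)/(i+α))² · |‖G_{i-j}^{(α-β+j, β+j)}‖|² / |‖G_{i-j+1}^{(β+j-1, α-β+j-1)}‖|² ≤ C · i^{-2(α-1)}. -/

import Mathlib

open Real MeasureTheory

/-- Square of the norm constant `|‖G_n^{(a,b)}‖|`. -/
noncomputable def Gnorm2 (a b : ℝ) (n : ℕ) : ℝ :=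
  Real.Gamma ((n : ℝ) + a + 1) * Real.Gamma ((n : ℝ) + b + 1) /
    ((2 * (n : ℝ) + a + b + 1) * Real.Gamma ((n : ℝ) + 1) * Real.Gamma ((n : ℝ) + a + b + 1))

/-- The eigenvalue `λ_n = [sin(πα)/(sin(π(α-β))+sin(πβ))]·Γ(n+α)/n!`. -/
noncomputable def lamda (α β : ℝ) (n : ℕ) : ℝ :=
  Real.sin (π * α) / (Real.sin (π * (α - β)) + Real.sin (π * β)) *
    (Real.Gamma ((n : ℝ) + α) / (n.factorial : ℝ))

lemma gautschi (α x : ℝ) (hα1 : 1 < α) (hα2 : α < 2) (hx : 1 ≤ x) :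
    Real.Gamma (x + 1) ≤ Real.Gamma (x + α) * x ^ (1 - α) := by
  have hx0 : 0 < x := lt_of_lt_of_le one_pos hx
  have hu : 0 < x + α - 1 := by linarith
  have h := Real.Gamma_mul_add_mul_le_rpow_Gamma_mul_rpow_Gamma
    (s := x + α - 1) (t := x + α) (a := α - 1) (b := 2 - α)
    (by linarith) (by linarith) (by linarith) (by linarith) (by ring)
  have harg : (α - 1) * (x + α - 1) + (2 - α) * (x + α) = x + 1 := by ring
  rw [harg] at h
  have hrec : Real.Gamma (x + α) = (x + α - 1) * Real.Gamma (x + α - 1) := by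
    have := Real.Gamma_add_one (s := x + α - 1) (by positivity)
    rw [show x + α - 1 + 1 = x + α by ring] at this
    exact this
  have hGpos : 0 < Real.Gamma (x + α - 1) := Real.Gamma_pos_of_pos hu
  calc Real.Gamma (x + 1) ≤ Real.Gamma (x + α - 1) ^ (α - 1) * Real.Gamma (x + α) ^ (2 - α) := h
    _ = Real.Gamma (x + α) * (x + α - 1) ^ (1 - α) := by
        have e1 : Real.Gamma (x+α-1) ^ (α-1) * Real.Gamma (x+α-1) ^ (2-α) = Real.Gamma (x+α-1) := by
          rw [← Real.rpow_add hGpos]; norm_num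
        have e2 : (x+α-1) ^ (2-α) = (x+α-1) * (x+α-1) ^ (1-α) := by
          rw [show (2-α : ℝ) = 1 + (1-α) by ring, Real.rpow_add hu, Real.rpow_one]
        rw [hrec, Real.mul_rpow hu.le hGpos.le, e2]
        linear_combination ((x+α-1) * (x+α-1) ^ (1-α)) * e1
    _ ≤ Real.Gamma (x + α) * x ^ (1 - α) := by
        have := Real.rpow_le_rpow_of_nonpos hx0 (by linarith : x ≤ x + α - 1) (by linarith : 1 - α ≤ 0)
        exact mul_le_mul_of_nonneg_left this (Real.Gamma_pos_of_pos (by linarith)).le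


set_option maxHeartbeats 1000000 in
/-- Decay estimate:
`(1/λ_i²)·((i+j+α)/(i+α))²·|‖G_{i-j}^{(α-β+j,β+j)}‖|²/|‖G_{i-j+1}^{(β+j-1,α-β+j-1)}‖|²
  ≤ C·i^{-2(α-1)}`. -/
theorem lamda_Gnorm2_decay (α β : ℝ) (hα1 : 1 < α) (hα2 : α < 2)
    (hβ1 : α - 1 ≤ β) (hβ2 : β ≤ 1) (j : ℕ) :
    ∃ C : ℝ, 0 < C ∧ ∀ i : ℕ, max j 1 ≤ i →
      1 / (lamda α β i) ^ 2 * (((i : ℝ) + (j : ℝ) + α) / ((i : ℝ) + α)) ^ 2 *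
          (Gnorm2 (α - β + (j : ℝ)) (β + (j : ℝ)) (i - j) /
            Gnorm2 (β + (j : ℝ) - 1) (α - β + (j : ℝ) - 1) (i - j + 1)) ≤
        C * (i : ℝ) ^ (-2 * (α - 1)) := by
  have hπ := Real.pi_pos
  set s : ℝ := Real.sin (π * α) with hs_def
  set d : ℝ := Real.sin (π * (α - β)) + Real.sin (π * β) with hd_def
  -- sin(πα) < 0
  have hs_neg : s < 0 := by
    have h1 : Real.sin (π * (α - 1)) > 0 :=
      Real.sin_pos_of_pos_of_lt_pi (mul_pos hπ (by linarith))
        (by have h := mul_lt_mul_of_pos_left (show α - 1 < 1 by linarith) hπ; simpa using h)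
    have h2 : π * α = π * (α - 1) + π := by ring
    rw [hs_def, h2, Real.sin_add_pi]
    linarith
  have hαβ1 : 0 < α - β := by linarith
  have hαβ2 : α - β ≤ 1 := by linarith
  have hβ0 : 0 < β := by linarith
  have hd_pos : 0 < d := by
    rcases lt_or_eq_of_le hβ2 with h | h
    · have h1 : 0 < Real.sin (π * β) := Real.sin_pos_of_pos_of_lt_pi (mul_pos hπ hβ0)
        (by have h2 := mul_lt_mul_of_pos_left h hπ; simpa using h2)
      have h2 : 0 ≤ Real.sin (π * (α - β)) :=
        Real.sin_nonneg_of_nonneg_of_le_pi (mul_nonneg hπ.le hαβ1.le)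
          (by have h2 := mul_le_mul_of_nonneg_left hαβ2 hπ.le; simpa using h2)
      rw [hd_def]; linarith
    · have hab : α - β < 1 := by rw [← h]; linarith
      have h1 : 0 < Real.sin (π * (α - β)) :=
        Real.sin_pos_of_pos_of_lt_pi (mul_pos hπ hαβ1)
          (by have h2 := mul_lt_mul_of_pos_left hab hπ; simpa using h2)
      have h2 : 0 ≤ Real.sin (π * β) :=
        Real.sin_nonneg_of_nonneg_of_le_pi (mul_nonneg hπ.le hβ0.le)
          (by have h2 := mul_le_mul_of_nonneg_left hβ2 hπ.le; simpa using h2)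
      rw [hd_def]; linarith
  have hds : d / s ≠ 0 := div_ne_zero hd_pos.ne' hs_neg.ne
  refine ⟨(d / s) ^ 2 * (2 * ((j : ℝ) + α + 1)),
    mul_pos (even_two.pow_pos hds) (by positivity), ?_⟩
  intro i hi
  have hji : j ≤ i := le_trans (le_max_left _ _) hi
  have hi1 : 1 ≤ i := le_trans (le_max_right _ _) hi
  set x : ℝ := (i : ℝ) with hx_def
  set k : ℝ := (j : ℝ) with hk_def
  have hx1 : (1 : ℝ) ≤ x := by rw [hx_def]; exact_mod_cast hi1
  have hkx : k ≤ x := by rw [hx_def, hk_def]; exact_mod_cast hji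
  have hk0 : 0 ≤ k := Nat.cast_nonneg j
  have hx0 : 0 < x := lt_of_lt_of_le one_pos hx1
  -- cast facts
  have hc1 : ((i - j : ℕ) : ℝ) = x - k := by
    rw [Nat.cast_sub hji]
  have hc2 : ((i - j + 1 : ℕ) : ℝ) = x - k + 1 := by
    push_cast [Nat.cast_sub hji]; ring
  -- positivity of Gammas
  have hA1 : 0 < Real.Gamma (x + (α - β) + 1) := Real.Gamma_pos_of_pos (by linarith)
  have hA2 : 0 < Real.Gamma (x + β + 1) := Real.Gamma_pos_of_pos (by linarith)
  have hB : 0 < Real.Gamma (x - k + 1) := Real.Gamma_pos_of_pos (by linarith)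
  have hD : 0 < Real.Gamma (x + k + α) := Real.Gamma_pos_of_pos (by linarith)
  have hG : 0 < Real.Gamma (x + α) := Real.Gamma_pos_of_pos (by linarith)
  have hF : 0 < Real.Gamma (x + 1) := Real.Gamma_pos_of_pos (by linarith)
  have hE : (0:ℝ) < 2 * x + α + 1 := by linarith
  have hxkα : (0:ℝ) < x + k + α := by linarith
  have hxk1 : (0:ℝ) < x - k + 1 := by linarith
  have hxα : (0:ℝ) < x + α := by linarith
  -- rewrite Gamma arguments
  have e1 : Real.Gamma (((i - j : ℕ) : ℝ) + (α - β + k) + 1) = Real.Gamma (x + (α - β) + 1) := by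
    rw [hc1]; ring_nf
  have e2 : Real.Gamma (((i - j : ℕ) : ℝ) + (β + k) + 1) = Real.Gamma (x + β + 1) := by
    rw [hc1]; ring_nf
  have e3 : Real.Gamma (((i - j : ℕ) : ℝ) + 1) = Real.Gamma (x - k + 1) := by rw [hc1]
  have e4 : Real.Gamma (((i - j : ℕ) : ℝ) + (α - β + k) + (β + k) + 1)
      = (x + k + α) * Real.Gamma (x + k + α) := by
    rw [hc1, show x - k + (α - β + k) + (β + k) + 1 = (x + k + α) + 1 by ring,
      Real.Gamma_add_one (ne_of_gt hxkα)]
  have f1 : Real.Gamma (((i - j + 1 : ℕ) : ℝ) + (β + k - 1) + 1) = Real.Gamma (x + β + 1) := by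
    rw [hc2]; ring_nf
  have f2 : Real.Gamma (((i - j + 1 : ℕ) : ℝ) + (α - β + k - 1) + 1)
      = Real.Gamma (x + (α - β) + 1) := by
    rw [hc2]; ring_nf
  have f3 : Real.Gamma (((i - j + 1 : ℕ) : ℝ) + 1) = (x - k + 1) * Real.Gamma (x - k + 1) := by
    rw [hc2, Real.Gamma_add_one (ne_of_gt hxk1)]
  have f4 : Real.Gamma (((i - j + 1 : ℕ) : ℝ) + (β + k - 1) + (α - β + k - 1) + 1)
      = Real.Gamma (x + k + α) := by
    rw [hc2]; ring_nf
  have hfac : ((i.factorial : ℕ) : ℝ) = Real.Gamma (x + 1) :=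
    (Real.Gamma_nat_eq_factorial i).symm
  have hE1 : 2 * (x - k) + (α - β + k) + (β + k) + 1 = 2 * x + α + 1 := by ring
  have hE2 : 2 * (x - k + 1) + (β + k - 1) + (α - β + k - 1) + 1 = 2 * x + α + 1 := by ring
  -- ratio of norm constants
  have hGr : Gnorm2 (α - β + k) (β + k) (i - j) / Gnorm2 (β + k - 1) (α - β + k - 1) (i - j + 1)
      = (x - k + 1) / (x + k + α) := by
    rw [Gnorm2, Gnorm2, e1, e2, e3, e4, f1, f2, f3, f4, hc1, hc2, hE1, hE2]
    rw [div_div_div_eq]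
    rw [div_eq_div_iff (by positivity) hxkα.ne']
    ring
  -- lamda in terms of x
  have hlam : lamda α β i = s / d * (Real.Gamma (x + α) / Real.Gamma (x + 1)) := by
    rw [lamda, hfac, ← hs_def, ← hd_def]
  rw [hGr]
  rw [hlam]
  have ns : s ≠ 0 := hs_neg.ne
  have nd : d ≠ 0 := hd_pos.ne'
  have nG : Real.Gamma (x + α) ≠ 0 := hG.ne'
  have nF : Real.Gamma (x + 1) ≠ 0 := hF.ne'
  have key : 1 / (s / d * (Real.Gamma (x + α) / Real.Gamma (x + 1))) ^ 2 *
        ((x + k + α) / (x + α)) ^ 2 * ((x - k + 1) / (x + k + α))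
      = (d / s) ^ 2 * (Real.Gamma (x + 1) / Real.Gamma (x + α)) ^ 2 *
        ((x + k + α) * (x - k + 1) / (x + α) ^ 2) := by
    field_simp
  rw [key]
  -- bounds
  have hRb : (Real.Gamma (x + 1) / Real.Gamma (x + α)) ^ 2 ≤ x ^ (-2 * (α - 1)) := by
    have h1 : Real.Gamma (x + 1) / Real.Gamma (x + α) ≤ x ^ (1 - α) := by
      rw [div_le_iff₀ hG]
      calc Real.Gamma (x + 1) ≤ Real.Gamma (x + α) * x ^ (1 - α) := gautschi α x hα1 hα2 hx1
        _ = x ^ (1 - α) * Real.Gamma (x + α) := by ring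
    have h0 : 0 ≤ Real.Gamma (x + 1) / Real.Gamma (x + α) := by positivity
    calc (Real.Gamma (x + 1) / Real.Gamma (x + α)) ^ 2 ≤ (x ^ (1 - α)) ^ 2 :=
        pow_le_pow_left₀ h0 h1 2
      _ = x ^ (-2 * (α - 1)) := by
        rw [← Real.rpow_natCast (x ^ (1 - α)) 2, ← Real.rpow_mul hx0.le]
        congr 1; push_cast; ring
  have hQb : (x + k + α) * (x - k + 1) / (x + α) ^ 2 ≤ 2 * (k + α + 1) := by
    rw [div_le_iff₀ (by positivity)]
    have q1 : x + k + α ≤ (k + α + 1) * x := by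
      have h := mul_nonneg (show (0:ℝ) ≤ k + α by linarith) (show (0:ℝ) ≤ x - 1 by linarith)
      have he : (k + α) * (x - 1) = (k + α + 1) * x - (x + k + α) := by ring
      linarith [he ▸ h]
    have q2 : x - k + 1 ≤ 2 * x := by linarith
    have q4 := mul_le_mul q1 q2 (by linarith) (by positivity)
    have q5 : x ^ 2 ≤ (x + α) ^ 2 := by
      have h2 : (0:ℝ) ≤ α * (2 * x + α) := by positivity
      have he : (x + α) ^ 2 - x ^ 2 = α * (2 * x + α) := by ring
      linarith
    calc (x + k + α) * (x - k + 1) ≤ (k + α + 1) * x * (2 * x) := q4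
      _ = 2 * (k + α + 1) * x ^ 2 := by ring
      _ ≤ 2 * (k + α + 1) * (x + α) ^ 2 :=
          mul_le_mul_of_nonneg_left q5 (by linarith)
  have hK : (0:ℝ) ≤ (d / s) ^ 2 := sq_nonneg _
  have hQ0 : (0:ℝ) ≤ (x + k + α) * (x - k + 1) / (x + α) ^ 2 := by positivity
  calc (d / s) ^ 2 * (Real.Gamma (x + 1) / Real.Gamma (x + α)) ^ 2 *
        ((x + k + α) * (x - k + 1) / (x + α) ^ 2)
      ≤ (d / s) ^ 2 * x ^ (-2 * (α - 1)) * (2 * (k + α + 1)) :=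
        mul_le_mul (mul_le_mul_of_nonneg_left hRb hK) hQb hQ0 (by positivity)
    _ = (d / s) ^ 2 * (2 * (k + α + 1)) * x ^ (-2 * (α - 1)) := by ring
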